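/- Let x > 0, let c : ℝ₊ → ℝ satisfy limsup_{y→∞} c(y)²/y < ∞, and let K_N be the generalized Post-Widder kernel. Then for each r ∈ {1,2} there is a constant C_{r,x} such that for all N ≥ 1: ∫₀^∞ |t−1|^r · |K_N(t,x)| dt ≤ C_{r,x} · N^{−r/2}. -/

import Mathlib

/-!
For `t > 0`, `|K_N(t,x)| = (|z|/N)^{N+1} · N^{N+1} t^N e^{-Nt} / N!` with `z = N + i x c(N/x)`.
The second factor is the Gamma(N+1, N) density, whose second moment about `1` is `(N+2)/N²`;
the first absolute moment follows from `2s|u| ≤ 1 + s²u²` with `s = √N`. The prefactor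
`(|z|/N)^{N+1} = (1 + (x c(N/x))²/N²)^{(N+1)/2}` stays bounded because the limsup hypothesis
makes `(x c(N/x))² = O(N)`.
-/

open MeasureTheory Real Set Filter
open scoped Nat

noncomputable def postWidderKernel (N : ℕ) (z : ℂ) (t : ℝ) : ℂ :=
  z ^ (N + 1) / (N ! : ℂ) * (t : ℂ) ^ N * Complex.exp (-z * t)

lemma norm_postWidderKernel (N : ℕ) (z : ℂ) {t : ℝ} (ht : 0 ≤ t) :
    ‖postWidderKernel N z t‖ = ‖z‖ ^ (N + 1) / N ! * (t ^ N * exp (-(z.re * t))) := by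
  simp [postWidderKernel, Complex.norm_exp, abs_of_nonneg ht, mul_assoc]

lemma integral_mul_norm_postWidderKernel (N : ℕ) (z : ℂ) (f : ℝ → ℝ) :
    ∫ t in Ioi 0, f t * ‖postWidderKernel N z t‖ =
      ‖z‖ ^ (N + 1) / N ! * ∫ t in Ioi 0, f t * (t ^ N * exp (-(z.re * t))) := by
  rw [← integral_const_mul]
  refine setIntegral_congr_fun measurableSet_Ioi fun t ht => ?_
  rw [norm_postWidderKernel N z (le_of_lt ht)]
  ring

lemma integrableOn_pow_mul_exp_neg_mul (n : ℕ) {b : ℝ} (hb : 0 < b) :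
    IntegrableOn (fun t : ℝ => t ^ n * exp (-(b * t))) (Ioi 0) := by
  refine (integrableOn_rpow_mul_exp_neg_mul_rpow (s := n) (p := 1)
    (neg_one_lt_zero.trans_le n.cast_nonneg) one_pos hb).congr_fun (fun t _ => ?_) measurableSet_Ioi
  simp [rpow_natCast, rpow_one, neg_mul]

lemma integral_pow_mul_exp_neg_mul_Ioi (n : ℕ) {b : ℝ} (hb : 0 < b) :
    ∫ t in Ioi 0, t ^ n * exp (-(b * t)) = n ! / b ^ (n + 1) := by
  have h := integral_rpow_mul_exp_neg_mul_Ioi (a := n + 1) (by positivity) hb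
  simp_rw [add_sub_cancel_right, Gamma_nat_eq_factorial, ← Nat.cast_succ, rpow_natCast] at h
  rw [h, one_div, inv_pow, inv_mul_eq_div]

lemma sub_sq_mul_pow_mul_exp_neg_mul (n : ℕ) (a b t : ℝ) :
    (t - a) ^ 2 * (t ^ n * exp (-(b * t))) =
      t ^ (n + 2) * exp (-(b * t)) - 2 * a * (t ^ (n + 1) * exp (-(b * t))) +
        a ^ 2 * (t ^ n * exp (-(b * t))) := by
  ring

lemma integrableOn_sub_sq_mul_pow_mul_exp_neg_mul (n : ℕ) (a : ℝ) {b : ℝ} (hb : 0 < b) :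
    IntegrableOn (fun t : ℝ => (t - a) ^ 2 * (t ^ n * exp (-(b * t)))) (Ioi 0) := by
  simp_rw [sub_sq_mul_pow_mul_exp_neg_mul]
  exact ((integrableOn_pow_mul_exp_neg_mul _ hb).sub
    ((integrableOn_pow_mul_exp_neg_mul _ hb).const_mul _)).add
    ((integrableOn_pow_mul_exp_neg_mul _ hb).const_mul _)

lemma integral_sub_sq_mul_pow_mul_exp_neg_mul_Ioi (n : ℕ) (a : ℝ) {b : ℝ} (hb : 0 < b) :
    ∫ t in Ioi 0, (t - a) ^ 2 * (t ^ n * exp (-(b * t))) =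
      n ! / b ^ (n + 1) * ((n + 1) * (n + 2) / b ^ 2 - 2 * a * (n + 1) / b + a ^ 2) := by
  have i0 := integrableOn_pow_mul_exp_neg_mul n hb
  have i1 := integrableOn_pow_mul_exp_neg_mul (n + 1) hb
  have i2 := integrableOn_pow_mul_exp_neg_mul (n + 2) hb
  simp_rw [sub_sq_mul_pow_mul_exp_neg_mul]
  rw [integral_add ?_ (i0.const_mul _), integral_sub i2 (i1.const_mul _),
    integral_const_mul, integral_const_mul, integral_pow_mul_exp_neg_mul_Ioi _ hb,
    integral_pow_mul_exp_neg_mul_Ioi _ hb, integral_pow_mul_exp_neg_mul_Ioi _ hb,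
    Nat.factorial_succ, Nat.factorial_succ]
  · push_cast
    field_simp
    ring
  · exact i2.sub (i1.const_mul _)

lemma integral_abs_mul_le_of_sq_mul {α : Type*} [MeasurableSpace α] {μ : Measure α}
    {f w : α → ℝ} (hw : 0 ≤ᵐ[μ] w) (hwi : Integrable w μ)
    (hfw : Integrable (fun a => f a ^ 2 * w a) μ) {s : ℝ} (hs : 0 < s) :
    ∫ a, |f a| * w a ∂μ ≤
      (∫ a, w a ∂μ + s ^ 2 * ∫ a, f a ^ 2 * w a ∂μ) / (2 * s) := by
  have amgm : ∀ u : ℝ, |u| ≤ (1 + s ^ 2 * u ^ 2) / (2 * s) := fun u => by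
    rw [le_div_iff₀ (by positivity)]
    nlinarith [sq_nonneg (s * |u| - 1), sq_abs u]
  rw [← integral_const_mul, ← integral_add hwi (hfw.const_mul _), ← integral_div]
  refine integral_mono_of_nonneg (hw.mono fun a ha => mul_nonneg (abs_nonneg _) ha)
    ((hwi.add (hfw.const_mul _)).div_const _) (hw.mono fun a ha => ?_)
  calc |f a| * w a ≤ (1 + s ^ 2 * f a ^ 2) / (2 * s) * w a := by gcongr; exact amgm _
    _ = _ := by ring

lemma integral_sub_one_sq_mul_pow_mul_exp_neg_mul_self_Ioi {N : ℕ} (hN : N ≠ 0) :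
    ∫ t in Ioi 0, (t - 1) ^ 2 * (t ^ N * exp (-(N * t))) =
      (N ! : ℝ) / N ^ (N + 1) * ((N + 2) / N ^ 2) := by
  have hN' : (0 : ℝ) < N := by positivity
  rw [integral_sub_sq_mul_pow_mul_exp_neg_mul_Ioi N 1 hN']
  field_simp
  ring

lemma integral_abs_sub_one_pow_mul_pow_mul_exp_neg_mul_self_le {N r : ℕ} (hN : N ≠ 0)
    (hr : r = 1 ∨ r = 2) :
    ∫ t in Ioi 0, |t - 1| ^ r * (t ^ N * exp (-(N * t))) ≤
      3 * (N ! / N ^ (N + 1)) * (N : ℝ) ^ (-(r : ℝ) / 2) := by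
  have hN' : (0 : ℝ) < N := by positivity
  have hN1 : (1 : ℝ) ≤ N := by exact_mod_cast Nat.one_le_iff_ne_zero.2 hN
  have hsq := integral_sub_one_sq_mul_pow_mul_exp_neg_mul_self_Ioi hN
  rcases hr with rfl | rfl
  · have hs : 0 < √(N : ℝ) := sqrt_pos.2 hN'
    have h := integral_abs_mul_le_of_sq_mul (μ := volume.restrict (Ioi 0)) (f := fun t => t - 1)
      (ae_restrict_of_forall_mem measurableSet_Ioi fun t ht =>
        mul_nonneg (pow_nonneg (le_of_lt ht) _) (exp_pos _).le)
      (integrableOn_pow_mul_exp_neg_mul N hN')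
      (integrableOn_sub_sq_mul_pow_mul_exp_neg_mul N 1 hN') hs
    rw [hsq, integral_pow_mul_exp_neg_mul_Ioi N hN', sq_sqrt hN'.le] at h
    simp only [pow_one]
    refine h.trans ?_
    rw [show (-((1 : ℕ) : ℝ) / 2) = -(1 / 2) by norm_num, rpow_neg hN'.le, ← sqrt_eq_rpow,
      div_le_iff₀ (by positivity)]
    field_simp
    nlinarith
  · simp only [sq_abs]
    rw [hsq, show (-((2 : ℕ) : ℝ) / 2) = -1 by norm_num, rpow_neg_one, mul_comm 3, mul_assoc]
    gcongr
    rw [div_le_iff₀ (by positivity)]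
    field_simp
    nlinarith

lemma norm_div_re_pow_succ_le_exp {z : ℂ} {N : ℕ} (hN : N ≠ 0) (hre : z.re = N) {D : ℝ}
    (him : z.im ^ 2 ≤ D * N) : (‖z‖ / N) ^ (N + 1) ≤ exp (2 * D) := by
  have hN' : (0 : ℝ) < N := by positivity
  have hN1 : (1 : ℝ) ≤ N := by exact_mod_cast Nat.one_le_iff_ne_zero.2 hN
  have hD : 0 ≤ D := nonneg_of_mul_nonneg_left ((sq_nonneg _).trans him) hN'
  have hz : ‖z‖ ^ 2 = N ^ 2 + z.im ^ 2 := by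
    rw [Complex.sq_norm, Complex.normSq_apply, hre]
    ring
  have hone : 1 ≤ ‖z‖ / N := by
    rw [one_le_div hN', ← hre]
    exact Complex.re_le_norm z
  have hsq : (‖z‖ / N) ^ 2 ≤ exp (D / N) := by
    calc (‖z‖ / N) ^ 2 ≤ 1 + D / N := by
          rw [div_pow, hz, div_le_iff₀ (by positivity)]
          field_simp
          nlinarith
      _ ≤ exp (D / N) := by linarith [add_one_le_exp (D / N)]
  calc (‖z‖ / N) ^ (N + 1) ≤ ((‖z‖ / N) ^ 2) ^ (N + 1) := by
        rw [← pow_mul]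
        exact pow_le_pow_right₀ hone (by omega)
    _ ≤ exp (D / N) ^ (N + 1) := by gcongr
    _ = exp ((N + 1) * (D / N)) := by rw [← exp_nat_mul]; push_cast; rfl
    _ ≤ exp (2 * D) := by
        rw [exp_le_exp, mul_div_assoc', div_le_iff₀ hN']
        nlinarith

lemma exists_sq_le_mul_of_isBoundedUnder {c : ℝ → ℝ}
    (hc : IsBoundedUnder (· ≤ ·) atTop fun y => c y ^ 2 / y) {x : ℝ} (hx : 0 < x) :
    ∃ B : ℝ, ∀ N : ℕ, N ≠ 0 → (x * c (N / x)) ^ 2 ≤ B * N := by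
  obtain ⟨B, hB⟩ : BddAbove (range fun N : ℕ => c (N / x) ^ 2 / (N / x)) :=
    ((tendsto_natCast_atTop_atTop.atTop_div_const hx).isBoundedUnder_comp hc).bddAbove_range
  refine ⟨x * B, fun N hN => ?_⟩
  have hNx : (0 : ℝ) < N / x := by positivity
  have h := (div_le_iff₀ hNx).1 (hB ⟨N, rfl⟩)
  calc (x * c (N / x)) ^ 2 = x ^ 2 * c (N / x) ^ 2 := by ring
    _ ≤ x ^ 2 * (B * (N / x)) := by gcongr
    _ = x * B * N := by field_simp

/-- moment bounds `∫₀^∞ |t-1|^r |K_N(t,x)| dt ≤ C_{r,x} N^{-r/2}`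
for `r ∈ {1,2}` for the generalized Post-Widder kernel. -/
theorem stmt_13 (x : ℝ) (hx : 0 < x) (c : ℝ → ℝ)
    (hc : Filter.IsBoundedUnder (· ≤ ·) Filter.atTop (fun y => c y ^ 2 / y))
    (K : ℕ → ℝ → ℂ)
    (hK : ∀ (N : ℕ) (t : ℝ), K N t =
      (((N : ℂ) + Complex.I * x * c (N / x)) ^ (N + 1) / (Nat.factorial N : ℂ)) *
        (t : ℂ) ^ N * Complex.exp (-((N : ℂ) + Complex.I * x * c (N / x)) * t)) :
    ∀ r ∈ ({1, 2} : Set ℕ), ∃ C : ℝ, ∀ N : ℕ, 1 ≤ N →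
      (∫ t in Set.Ioi (0 : ℝ), |t - 1| ^ r * ‖K N t‖) ≤
        C * (N : ℝ) ^ (-(r : ℝ) / 2) := by
  intro r hr
  obtain ⟨B, hB⟩ := exists_sq_le_mul_of_isBoundedUnder hc hx
  refine ⟨3 * exp (2 * B), fun N hN => ?_⟩
  have hN0 : N ≠ 0 := by omega
  set z : ℂ := N + Complex.I * x * c (N / x)
  have hre : z.re = N := by simp [z]
  have hfactor := norm_div_re_pow_succ_le_exp hN0 hre (D := B) (by simpa [z] using hB N hN0)
  have hmoment := integral_abs_sub_one_pow_mul_pow_mul_exp_neg_mul_self_le hN0 (r := r)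
    (by simpa using hr)
  have hKN : K N = postWidderKernel N z := funext (hK N)
  rw [hKN, integral_mul_norm_postWidderKernel, hre]
  calc ‖z‖ ^ (N + 1) / N ! * ∫ t in Ioi 0, |t - 1| ^ r * (t ^ N * exp (-(N * t)))
      ≤ ‖z‖ ^ (N + 1) / N ! * (3 * (N ! / N ^ (N + 1)) * (N : ℝ) ^ (-(r : ℝ) / 2)) := by
        gcongr
    _ = 3 * (‖z‖ / N) ^ (N + 1) * (N : ℝ) ^ (-(r : ℝ) / 2) := by
        rw [div_pow]
        field_simp
    _ ≤ 3 * exp (2 * B) * (N : ℝ) ^ (-(r : ℝ) / 2) := by gcongr
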